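/- For a real Banach lattice E the following are equivalent: (1) E has the positive Schur property; (2) every LW-compact operator from E into an arbitrary Banach space is DW-compact; (3) every LW-compact operator T : E → ℓ^∞ is DW-compact. -/

import Mathlib

open Filter Topology Metric Bornology ZeroAtInfty NormedSpace

/-- A sequence in a normed space is weakly null if it converges to zero in the weak topology,
i.e. `f (x n) → 0` for every continuous linear functional `f`. -/
def WeaklyNull {X : Type*} [NormedAddCommGroup X] [NormedSpace ℝ X] (x : ℕ → X) : Prop :=
  ∀ f : X →L[ℝ] ℝ, Tendsto (fun n => f (x n)) atTop (𝓝 0)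

/-- A sequence in a Banach lattice is disjoint if `|x m| ⊓ |x n| = 0` for `m ≠ n`. -/
def DisjointSeq {E : Type*} [NormedAddCommGroup E] [Lattice E] [IsOrderedAddMonoid E] [HasSolidNorm E] (x : ℕ → E) : Prop :=
  ∀ m n, m ≠ n → |x m| ⊓ |x n| = 0

/-- The solid hull of a set in a Banach lattice. -/
def SolidHull {E : Type*} [NormedAddCommGroup E] [Lattice E] [IsOrderedAddMonoid E] [HasSolidNorm E] (A : Set E) : Set E :=
  {y | ∃ x ∈ A, |y| ≤ |x|}

/-- A norm bounded set `A` is disjointly weakly compact if every disjoint sequence in the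
solid hull of `A` is weakly null. -/
def DisjointlyWeaklyCompact {E : Type*} [NormedAddCommGroup E] [Lattice E] [IsOrderedAddMonoid E] [HasSolidNorm E] [NormedSpace ℝ E]
    (A : Set E) : Prop :=
  IsBounded A ∧ ∀ x : ℕ → E, (∀ n, x n ∈ SolidHull A) → DisjointSeq x → WeaklyNull x

/-- An operator is DW-compact if it maps disjointly weakly compact sets onto relatively
norm compact sets. -/
def DWCompact {E X : Type*} [NormedAddCommGroup E] [Lattice E] [IsOrderedAddMonoid E] [HasSolidNorm E] [NormedSpace ℝ E]
    [NormedAddCommGroup X] [NormedSpace ℝ X] (T : E →L[ℝ] X) : Prop :=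
  ∀ A : Set E, DisjointlyWeaklyCompact A → IsCompact (closure (T '' A))

/-- A compact operator maps the closed unit ball onto a relatively norm compact set. -/
def CompactOp {X Y : Type*} [NormedAddCommGroup X] [NormedSpace ℝ X]
    [NormedAddCommGroup Y] [NormedSpace ℝ Y] (T : X →L[ℝ] Y) : Prop :=
  IsCompact (closure (T '' closedBall 0 1))

/-- A set is relatively weakly compact if its closure in the weak topology is compact. -/
def RelWeaklyCompact {X : Type*} [NormedAddCommGroup X] [NormedSpace ℝ X] (A : Set X) : Prop :=
  IsCompact (closure (toWeakSpace ℝ X '' A))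

/-- A weakly compact operator maps the closed unit ball onto a relatively weakly compact set. -/
def WeaklyCompactOp {X Y : Type*} [NormedAddCommGroup X] [NormedSpace ℝ X]
    [NormedAddCommGroup Y] [NormedSpace ℝ Y] (T : X →L[ℝ] Y) : Prop :=
  RelWeaklyCompact (T '' closedBall 0 1)

/-- A Dunford-Pettis operator sends weakly null sequences to norm null sequences. -/
def DunfordPettisOp {X Y : Type*} [NormedAddCommGroup X] [NormedSpace ℝ X]
    [NormedAddCommGroup Y] [NormedSpace ℝ Y] (T : X →L[ℝ] Y) : Prop :=
  ∀ x : ℕ → X, WeaklyNull x → Tendsto (fun n => ‖T (x n)‖) atTop (𝓝 0)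

/-- An almost Dunford-Pettis operator sends disjoint weakly null sequences to norm null
sequences. -/
def AlmostDunfordPettisOp {E X : Type*} [NormedAddCommGroup E] [Lattice E] [IsOrderedAddMonoid E] [HasSolidNorm E] [NormedSpace ℝ E]
    [NormedAddCommGroup X] [NormedSpace ℝ X] (T : E →L[ℝ] X) : Prop :=
  ∀ x : ℕ → E, DisjointSeq x → WeaklyNull x → Tendsto (fun n => ‖T (x n)‖) atTop (𝓝 0)

/-- An AM-compact operator maps order intervals `[-u, u]` onto relatively norm compact sets. -/
def AMCompact {E X : Type*} [NormedAddCommGroup E] [Lattice E] [IsOrderedAddMonoid E] [HasSolidNorm E] [NormedSpace ℝ E]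
    [NormedAddCommGroup X] [NormedSpace ℝ X] (T : E →L[ℝ] X) : Prop :=
  ∀ u : E, 0 ≤ u → IsCompact (closure (T '' Set.Icc (-u) u))

/-- A disjointly weakly compact operator maps the closed unit ball onto a disjointly weakly
compact set. -/
def DisjointlyWeaklyCompactOp {Y E : Type*} [NormedAddCommGroup Y] [NormedSpace ℝ Y]
    [NormedAddCommGroup E] [Lattice E] [IsOrderedAddMonoid E] [HasSolidNorm E] [NormedSpace ℝ E] (S : Y →L[ℝ] E) : Prop :=
  DisjointlyWeaklyCompact (S '' closedBall 0 1)

/-- A norm bounded set `A` is L-weakly compact if every disjoint sequence in the solid hull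
of `A` is norm null. -/
def LWeaklyCompactSet {E : Type*} [NormedAddCommGroup E] [Lattice E] [IsOrderedAddMonoid E] [HasSolidNorm E] [NormedSpace ℝ E]
    (A : Set E) : Prop :=
  IsBounded A ∧ ∀ x : ℕ → E, (∀ n, x n ∈ SolidHull A) → DisjointSeq x →
    Tendsto (fun n => ‖x n‖) atTop (𝓝 0)

/-- An LW-compact operator maps L-weakly compact sets onto relatively norm compact sets. -/
def LWCompact {E X : Type*} [NormedAddCommGroup E] [Lattice E] [IsOrderedAddMonoid E] [HasSolidNorm E] [NormedSpace ℝ E]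
    [NormedAddCommGroup X] [NormedSpace ℝ X] (T : E →L[ℝ] X) : Prop :=
  ∀ A : Set E, LWeaklyCompactSet A → IsCompact (closure (T '' A))

/-- Schur property: every weakly null sequence is norm null. -/
def SchurProp (X : Type*) [NormedAddCommGroup X] [NormedSpace ℝ X] : Prop :=
  ∀ x : ℕ → X, WeaklyNull x → Tendsto (fun n => ‖x n‖) atTop (𝓝 0)

/-- Positive Schur property: every disjoint weakly null sequence is norm null. -/
def PositiveSchurProp (E : Type*) [NormedAddCommGroup E] [Lattice E] [IsOrderedAddMonoid E] [HasSolidNorm E] [NormedSpace ℝ E] : Prop :=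
  ∀ x : ℕ → E, DisjointSeq x → WeaklyNull x → Tendsto (fun n => ‖x n‖) atTop (𝓝 0)

/-- A set is weakly precompact if every sequence in it admits a weakly Cauchy subsequence. -/
def WeaklyPrecompact {X : Type*} [NormedAddCommGroup X] [NormedSpace ℝ X] (A : Set X) : Prop :=
  ∀ x : ℕ → X, (∀ n, x n ∈ A) → ∃ φ : ℕ → ℕ, StrictMono φ ∧
    ∀ f : X →L[ℝ] ℝ, ∃ l : ℝ, Tendsto (fun n => f (x (φ n))) atTop (𝓝 l)

/-- `posDualAbs f x`, for `x ≥ 0`, is `|f|(x) = sup {f u : |u| ≤ x}` (Riesz–Kantorovich). -/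
noncomputable def posDualAbs {E : Type*} [NormedAddCommGroup E] [Lattice E] [IsOrderedAddMonoid E] [HasSolidNorm E] [NormedSpace ℝ E]
    (f : E →L[ℝ] ℝ) (x : E) : ℝ :=
  sSup (f '' {u : E | |u| ≤ x})

/-- `dualAbs f x = |f| x` is the modulus of the functional `f` evaluated at `x`. -/
noncomputable def dualAbs {E : Type*} [NormedAddCommGroup E] [Lattice E] [IsOrderedAddMonoid E] [HasSolidNorm E] [NormedSpace ℝ E]
    (f : E →L[ℝ] ℝ) (x : E) : ℝ :=
  posDualAbs f x⁺ - posDualAbs f x⁻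

/-- A set `A` is `|σ|(E,E′)`-totally bounded: for every `ε > 0` and finite family of
functionals there is a finite subset `Φ` of `A` with
`A ⊆ Φ + ⋂ᵢ {x : |fᵢ|(|x|) < ε}`. -/
def AbsWeakTotallyBounded {E : Type*} [NormedAddCommGroup E] [Lattice E] [IsOrderedAddMonoid E] [HasSolidNorm E] [NormedSpace ℝ E]
    (A : Set E) : Prop :=
  ∀ ε : ℝ, 0 < ε → ∀ S : Finset (E →L[ℝ] ℝ),
    ∃ Φ : Finset E, ↑Φ ⊆ A ∧ ∀ a ∈ A, ∃ y ∈ Φ, ∀ f ∈ S, posDualAbs f |a - y| < ε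

/-- The canonical order on the dual of a Banach lattice: `f ≤ g` iff `f x ≤ g x` for
all `x ≥ 0`. -/
def DualLe {E : Type*} [NormedAddCommGroup E] [Lattice E] [IsOrderedAddMonoid E] [HasSolidNorm E] [NormedSpace ℝ E]
    (f g : E →L[ℝ] ℝ) : Prop :=
  ∀ x : E, 0 ≤ x → f x ≤ g x

/-- The norm of the dual `E′` is order continuous: `‖f i‖ → 0` for every net `(f i)` in `E′`
decreasing to `0` (in the canonical dual order). -/
def DualOrderContinuousNorm (E : Type*) [NormedAddCommGroup E] [Lattice E] [IsOrderedAddMonoid E] [HasSolidNorm E] [NormedSpace ℝ E] :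
    Prop :=
  ∀ (ι : Type) (_ : Preorder ι), IsDirected ι (· ≤ ·) → Nonempty ι →
    ∀ f : ι → E →L[ℝ] ℝ,
      (∀ i j, i ≤ j → DualLe (f j) (f i)) →
      (∀ i, DualLe 0 (f i)) →
      (∀ g : E →L[ℝ] ℝ, (∀ i, DualLe g (f i)) → DualLe g 0) →
      Tendsto (fun i => ‖f i‖) atTop (𝓝 0)

/-- The norm of a Banach lattice is order continuous: `‖y i‖ → 0` for every net `(y i)`
decreasing to `0`. -/
def OrderContinuousNorm (E : Type*) [NormedAddCommGroup E] [Lattice E] [IsOrderedAddMonoid E] [HasSolidNorm E] : Prop :=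
  ∀ (ι : Type) (_ : Preorder ι), IsDirected ι (· ≤ ·) → Nonempty ι →
    ∀ y : ι → E, Antitone y → IsGLB (Set.range y) 0 →
      Tendsto (fun i => ‖y i‖) atTop (𝓝 0)

/-- An order bounded operator maps order intervals into order bounded sets. -/
def OrderBoundedOp {E F : Type*} [NormedAddCommGroup E] [Lattice E] [IsOrderedAddMonoid E] [HasSolidNorm E] [NormedSpace ℝ E]
    [NormedAddCommGroup F] [Lattice F] [IsOrderedAddMonoid F] [HasSolidNorm F] [NormedSpace ℝ F] (T : E →L[ℝ] F) : Prop :=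
  ∀ x : E, 0 ≤ x → ∃ y : F, ∀ u : E, |u| ≤ x → |T u| ≤ y

/-- A positive operator maps the positive cone into the positive cone. -/
def PositiveOp {E F : Type*} [NormedAddCommGroup E] [Lattice E] [IsOrderedAddMonoid E] [HasSolidNorm E] [NormedSpace ℝ E]
    [NormedAddCommGroup F] [Lattice F] [IsOrderedAddMonoid F] [HasSolidNorm F] [NormedSpace ℝ F] (T : E →L[ℝ] F) : Prop :=
  ∀ x : E, 0 ≤ x → 0 ≤ T x

/-- An order weakly compact operator maps order intervals `[0, u]` onto relatively weakly
compact sets. -/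
def OrderWeaklyCompactOp {F X : Type*} [NormedAddCommGroup F] [Lattice F] [IsOrderedAddMonoid F] [HasSolidNorm F] [NormedSpace ℝ F]
    [NormedAddCommGroup X] [NormedSpace ℝ X] (T : F →L[ℝ] X) : Prop :=
  ∀ u : F, 0 ≤ u → RelWeaklyCompact (T '' Set.Icc 0 u)

/-- A bounded set is limited if every weak*-null sequence of functionals converges to zero
uniformly on it. -/
def IsLimitedSet {X : Type*} [NormedAddCommGroup X] [NormedSpace ℝ X] (A : Set X) : Prop :=
  ∀ f : ℕ → X →L[ℝ] ℝ, (∀ x : X, Tendsto (fun n => f n x) atTop (𝓝 0)) →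
    TendstoUniformlyOn (fun n x => f n x) 0 atTop A

/-- A bounded set is a Dunford-Pettis set if every weakly null sequence of functionals
converges to zero uniformly on it. -/
def IsDPSet {X : Type*} [NormedAddCommGroup X] [NormedSpace ℝ X] (A : Set X) : Prop :=
  ∀ f : ℕ → X →L[ℝ] ℝ, WeaklyNull f → TendstoUniformlyOn (fun n x => f n x) 0 atTop A

/-- A Banach lattice has the (d)-DP* property if every disjointly weakly compact set is
limited. -/
def dDPstarProp (E : Type*) [NormedAddCommGroup E] [Lattice E] [IsOrderedAddMonoid E] [HasSolidNorm E] [NormedSpace ℝ E] : Prop :=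
  ∀ A : Set E, DisjointlyWeaklyCompact A → IsLimitedSet A

/-- A Banach lattice has the (d)-DP property if every disjointly weakly compact set is a
Dunford-Pettis set. -/
def dDPProp (E : Type*) [NormedAddCommGroup E] [Lattice E] [IsOrderedAddMonoid E] [HasSolidNorm E] [NormedSpace ℝ E] : Prop :=
  ∀ A : Set E, DisjointlyWeaklyCompact A → IsDPSet A

/-- A Banach space has the Dunford-Pettis property if every relatively weakly compact set
is a Dunford-Pettis set. -/
def DunfordPettisProp (X : Type*) [NormedAddCommGroup X] [NormedSpace ℝ X] : Prop :=
  ∀ A : Set X, RelWeaklyCompact A → IsDPSet A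

/-- A Banach space is a Gelfand-Phillips space if every (bounded) limited set is relatively
norm compact. -/
def GelfandPhillips (X : Type*) [NormedAddCommGroup X] [NormedSpace ℝ X] : Prop :=
  ∀ A : Set X, IsBounded A → IsLimitedSet A → IsCompact (closure A)

/-- A sequence of functionals is an L-sequence if `{f n}` is an L-set: it converges to zero
uniformly (in `n`) along every weakly null sequence of the space. -/
def IsLSequence {X : Type*} [NormedAddCommGroup X] [NormedSpace ℝ X]
    (f : ℕ → X →L[ℝ] ℝ) : Prop :=
  ∀ x : ℕ → X, WeaklyNull x →
    ∀ ε : ℝ, 0 < ε → ∃ M : ℕ, ∀ m ≥ M, ∀ n : ℕ, |f n (x m)| < ε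

/-- σ-Dedekind complete: every nonempty countable order bounded set has a supremum. -/
def SigmaDedekindComplete (E : Type*) [NormedAddCommGroup E] [Lattice E] [IsOrderedAddMonoid E] [HasSolidNorm E] : Prop :=
  ∀ A : Set E, A.Countable → A.Nonempty → BddBelow A → BddAbove A → ∃ s, IsLUB A s

/-- KB-space: every increasing norm bounded sequence in the positive cone is norm
convergent. -/
def KBSpace (E : Type*) [NormedAddCommGroup E] [Lattice E] [IsOrderedAddMonoid E] [HasSolidNorm E] : Prop :=
  ∀ x : ℕ → E, (∀ n, 0 ≤ x n) → Monotone x → (∃ C : ℝ, ∀ n, ‖x n‖ ≤ C) →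
    ∃ y : E, Tendsto x atTop (𝓝 y)

/-!
(1 ⇒ 2): under the positive Schur property, disjointly weakly compact sets are L-weakly compact.

(3 ⇒ 1): suppose a disjoint weakly null sequence stays away from `0`; after flipping signs,
`ε ≤ ‖(y k)⁺‖`. Let `H k` be the component, in the band generated by `(y k)⁺`, of a positive
functional norming `(y k)⁺`, and `T u = (H k u)ₖ ∈ ℓ^∞`. Since the bands are disjoint, the
coordinates of `T` tend to zero uniformly on every L-weakly compact set, so `T` is LW-compact. On
the other hand `{y k}` is disjointly weakly compact (a disjoint sequence dominated by it is weakly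
null: by summability when it is dominated by finitely many `y k`, by Mazur's lemma otherwise),
while `H k (y m) = 0` for `k ≠ m` makes the `T (y k)` `ε`-separated.
-/

section LatticeOrderedGroup

variable {α ι : Type*} [Lattice α] [AddCommGroup α] [IsOrderedAddMonoid α]

theorem inf_add_le_inf_add_inf {a b c : α} (ha : 0 ≤ a) (hb : 0 ≤ b) (hc : 0 ≤ c) :
    c ⊓ (a + b) ≤ c ⊓ a + c ⊓ b := by
  rw [inf_add, add_inf, add_inf]
  exact le_inf (le_inf (inf_le_left.trans (le_add_of_nonneg_right hc))
      (inf_le_left.trans (le_add_of_nonneg_right hb)))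
    (le_inf (inf_le_left.trans (le_add_of_nonneg_left ha)) inf_le_right)

theorem inf_sum_eq_zero {s : Finset ι} {b : ι → α} {c : α} (hc : 0 ≤ c)
    (hb : ∀ i ∈ s, 0 ≤ b i) (h : ∀ i ∈ s, c ⊓ b i = 0) : c ⊓ ∑ i ∈ s, b i = 0 := by
  refine le_antisymm ?_ (le_inf hc (Finset.sum_nonneg hb))
  calc c ⊓ ∑ i ∈ s, b i ≤ ∑ i ∈ s, c ⊓ b i :=
        Finset.le_sum_of_subadditive_on_pred (c ⊓ ·) (0 ≤ ·) inf_le_right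
          (fun _ _ hx hy => inf_add_le_inf_add_inf hx hy hc) (fun _ _ => add_nonneg) b hb
    _ = 0 := Finset.sum_eq_zero h

theorem inf_nsmul_eq_zero {a b : α} (ha : 0 ≤ a) (hb : 0 ≤ b) (hab : a ⊓ b = 0) (n : ℕ) :
    a ⊓ n • b = 0 := by
  simpa using inf_sum_eq_zero (s := Finset.range n) (b := fun _ => b) ha (fun _ _ => hb)
    (fun _ _ => hab)

theorem nsmul_inf_nsmul_eq_zero {a b : α} (ha : 0 ≤ a) (hb : 0 ≤ b) (hab : a ⊓ b = 0)
    (m n : ℕ) : m • a ⊓ n • b = 0 := by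
  rw [inf_comm]
  exact inf_nsmul_eq_zero (nsmul_nonneg hb n) ha
    (by rw [inf_comm]; exact inf_nsmul_eq_zero ha hb hab n) m

theorem nonneg_of_nsmul_nonneg {n : ℕ} (hn : n ≠ 0) {a : α} (h : 0 ≤ n • a) : 0 ≤ a := by
  have hdisj : n • a⁻ ⊓ n • a⁺ = 0 := nsmul_inf_nsmul_eq_zero (negPart_nonneg a)
    (posPart_nonneg a) (by rw [inf_comm, posPart_inf_negPart_eq_zero]) n n
  have hle : n • a⁻ ≤ n • a⁺ := by rwa [← posPart_sub_negPart a, nsmul_sub, sub_nonneg] at h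
  rw [inf_eq_left.mpr hle] at hdisj
  have : a⁻ ≤ 0 := hdisj ▸ le_self_nsmul (negPart_nonneg a) hn
  exact negPart_eq_zero.mp (le_antisymm this (negPart_nonneg a))

theorem posPart_le_abs (a : α) : a⁺ ≤ |a| :=
  posPart_add_negPart a ▸ le_add_of_nonneg_right (negPart_nonneg a)

theorem negPart_le_abs (a : α) : a⁻ ≤ |a| :=
  posPart_add_negPart a ▸ le_add_of_nonneg_left (posPart_nonneg a)

theorem posPart_add_le (a b : α) : (a + b)⁺ ≤ a⁺ + b⁺ := by
  rw [posPart_def]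
  exact sup_le (add_le_add (le_posPart a) (le_posPart b))
    (add_nonneg (posPart_nonneg a) (posPart_nonneg b))

theorem sum_le_of_pairwise_inf_eq_zero {s : Finset ι} {a : ι → α} (ha : ∀ i ∈ s, 0 ≤ a i)
    (hdisj : (s : Set ι).Pairwise fun i j => a i ⊓ a j = 0) {u : α} (hu : 0 ≤ u)
    (hau : ∀ i ∈ s, a i ≤ u) : ∑ i ∈ s, a i ≤ u := by
  classical
  induction s using Finset.induction_on with
  | empty => simpa using hu
  | insert j s hj ih =>
    simp only [Finset.mem_insert, forall_eq_or_imp, Finset.coe_insert,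
      Set.pairwise_insert] at ha hau hdisj
    have hj0 : a j ⊓ ∑ i ∈ s, a i = 0 :=
      inf_sum_eq_zero ha.1 ha.2 fun i hi => (hdisj.2 i hi (ne_of_mem_of_not_mem hi hj).symm).1
    rw [Finset.sum_insert hj, ← inf_add_sup, hj0, zero_add]
    exact sup_le hau.1 (ih ha.2 hdisj.1 hau.2)

theorem abs_add_eq_add_abs_of_inf_eq_zero {a b : α} (h : |a| ⊓ |b| = 0) :
    |a + b| = |a| + |b| := by
  have key : ∀ {x y : α}, |x| ⊓ |y| = 0 → |x| ≤ |x + y| := fun {x y} hxy => calc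
    |x| = |x| ⊓ (|x + y| + |y|) := by
        refine (inf_eq_left.mpr ?_).symm
        simpa using abs_add_le (x + y) (-y)
    _ ≤ |x| ⊓ |x + y| + |x| ⊓ |y| :=
        inf_add_le_inf_add_inf (abs_nonneg _) (abs_nonneg _) (abs_nonneg _)
    _ ≤ |x + y| := by rw [hxy, add_zero]; exact inf_le_right
  refine le_antisymm (abs_add_le a b) ?_
  rw [← inf_add_sup, h, zero_add]
  exact sup_le (key h) (add_comm a b ▸ key (inf_comm |a| |b| ▸ h))

theorem abs_sum_eq_sum_abs_of_pairwise {s : Finset ι} {g : ι → α}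
    (hdisj : (s : Set ι).Pairwise fun i j => |g i| ⊓ |g j| = 0) :
    |∑ i ∈ s, g i| = ∑ i ∈ s, |g i| := by
  classical
  induction s using Finset.induction_on with
  | empty => simp
  | insert j s hj ih =>
    simp only [Finset.coe_insert, Set.pairwise_insert] at hdisj
    have hj0 : |g j| ⊓ |∑ i ∈ s, g i| = 0 := by
      rw [ih hdisj.1]
      exact inf_sum_eq_zero (abs_nonneg _) (fun _ _ => abs_nonneg _)
        fun i hi => (hdisj.2 i hi (ne_of_mem_of_not_mem hi hj).symm).1
    rw [Finset.sum_insert hj, Finset.sum_insert hj, abs_add_eq_add_abs_of_inf_eq_zero hj0,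
      ih hdisj.1]

end LatticeOrderedGroup

section OrderedModule

variable {𝕜 M : Type*} [Field 𝕜] [LinearOrder 𝕜] [IsStrictOrderedRing 𝕜] [Lattice M]
  [AddCommGroup M] [Module 𝕜 M] [IsOrderedModule 𝕜 M]

theorem smul_sup_of_nonneg {c : 𝕜} (hc : 0 ≤ c) (a b : M) : c • (a ⊔ b) = c • a ⊔ c • b := by
  rcases hc.eq_or_lt with rfl | hc
  · simp
  · exact (OrderIso.smulRight hc).map_sup a b

theorem smul_inf_of_nonneg {c : 𝕜} (hc : 0 ≤ c) (a b : M) : c • (a ⊓ b) = c • a ⊓ c • b := by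
  rcases hc.eq_or_lt with rfl | hc
  · simp
  · exact (OrderIso.smulRight hc).map_inf a b

theorem abs_smul_of_nonneg {c : 𝕜} (hc : 0 ≤ c) (a : M) : |c • a| = c • |a| := by
  simp only [abs, smul_sup_of_nonneg hc, smul_neg]

theorem posPart_smul_of_nonneg {c : 𝕜} (hc : 0 ≤ c) (a : M) : (c • a)⁺ = c • a⁺ := by
  simp only [posPart_def, smul_sup_of_nonneg hc, smul_zero]

variable [IsOrderedAddMonoid M]

theorem smul_inf_smul_eq_zero {a b : M} (ha : 0 ≤ a) (hb : 0 ≤ b) (hab : a ⊓ b = 0) {μ ν : 𝕜}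
    (hμ : 0 ≤ μ) (hν : 0 ≤ ν) : μ • a ⊓ ν • b = 0 := by
  refine le_antisymm ?_ (le_inf (smul_nonneg hμ ha) (smul_nonneg hν hb))
  calc μ • a ⊓ ν • b ≤ (μ + ν) • a ⊓ (μ + ν) • b :=
        inf_le_inf (smul_le_smul_of_nonneg_right (le_add_of_nonneg_right hν) ha)
          (smul_le_smul_of_nonneg_right (le_add_of_nonneg_left hμ) hb)
    _ = 0 := by rw [← smul_inf_of_nonneg (add_nonneg hμ hν), hab, smul_zero]

end OrderedModule

section BanachLattice

variable {E : Type*} [NormedAddCommGroup E] [Lattice E] [IsOrderedAddMonoid E] [HasSolidNorm E]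
  [NormedSpace ℝ E]

theorem smul_nonneg_of_hasSolidNorm {c : ℝ} (hc : 0 ≤ c) {x : E} (hx : 0 ≤ x) : 0 ≤ c • x := by
  have hfrac : ∀ m n : ℕ, 0 ≤ ((m : ℝ) / n) • x := by
    intro m n
    rcases eq_or_ne n 0 with rfl | hn
    · simp
    refine nonneg_of_nsmul_nonneg hn ?_
    rw [← Nat.cast_smul_eq_nsmul ℝ, smul_smul, mul_div_cancel₀ _ (Nat.cast_ne_zero.mpr hn),
      Nat.cast_smul_eq_nsmul]
    exact nsmul_nonneg hx m
  have hlim : Tendsto (fun n : ℕ => ((⌊c * n⌋₊ : ℝ) / n) • x) atTop (𝓝 (c • x)) :=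
    ((tendsto_nat_floor_mul_div_atTop hc).comp tendsto_natCast_atTop_atTop).smul_const x
  exact isClosed_nonneg.mem_of_tendsto hlim (Eventually.of_forall fun n => hfrac _ _)

/-- Real scalars respect the order: the positive cone is closed and `0 ≤ n • a → 0 ≤ a`. -/
instance : IsOrderedModule ℝ E :=
  .of_smul_nonneg fun _ hc _ hx => smul_nonneg_of_hasSolidNorm hc hx

end BanachLattice

section WeaklyNull

variable {X : Type*} [NormedAddCommGroup X] [NormedSpace ℝ X]

theorem WeaklyNull.comp_tendsto {x : ℕ → X} (hx : WeaklyNull x) {φ : ℕ → ℕ}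
    (hφ : Tendsto φ atTop atTop) : WeaklyNull (x ∘ φ) :=
  fun f => (hx f).comp hφ

theorem WeaklyNull.exists_forall_norm_le {x : ℕ → X} (hx : WeaklyNull x) :
    ∃ C, ∀ n, ‖x n‖ ≤ C := by
  obtain ⟨C, hC⟩ := banach_steinhaus (g := fun n => inclusionInDoubleDualLi ℝ (x n))
    fun f => ((hx f).norm.bddAbove_range).imp fun _ h n => h ⟨n, rfl⟩
  exact ⟨C, fun n => (inclusionInDoubleDualLi ℝ).norm_map (x n) ▸ hC n⟩

/-- Mazur's lemma for weakly null sequences. -/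
theorem WeaklyNull.exists_convexCombination_norm_lt {x : ℕ → X} (hx : WeaklyNull x) {δ : ℝ}
    (hδ : 0 < δ) : ∃ (s : Finset ℕ) (μ : ℕ → ℝ), (∀ i ∈ s, 0 ≤ μ i) ∧ ∑ i ∈ s, μ i = 1 ∧
      ‖∑ i ∈ s, μ i • x i‖ < δ := by
  have hzero : (0 : X) ∈ closure (convexHull ℝ (Set.range x)) := by
    by_contra h
    obtain ⟨f, u, hfu, hu⟩ :=
      geometric_hahn_banach_closed_point (convex_convexHull ℝ _).closure isClosed_closure h
    rw [map_zero] at hu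
    obtain ⟨n, hn⟩ := ((hx f).eventually (lt_mem_nhds hu)).exists
    exact (hfu _ (subset_closure (subset_convexHull ℝ _ ⟨n, rfl⟩))).not_gt hn
  obtain ⟨c, hc, hcδ⟩ := Metric.mem_closure_iff.mp hzero δ hδ
  rw [convexHull_range_eq_exists_affineCombination] at hc
  obtain ⟨s, μ, hμ0, hμ1, rfl⟩ := hc
  refine ⟨s, μ, hμ0, hμ1, ?_⟩
  rwa [← Finset.affineCombination_eq_linear_combination s x μ hμ1, ← dist_zero_left]

end WeaklyNull

section DisjointlyWeaklyCompact

theorem exists_abs_eq_and_apply_eq_abs {E : Type*} [NormedAddCommGroup E] [Lattice E]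
    [NormedSpace ℝ E] (f : E →L[ℝ] ℝ) (w : E) : ∃ w' : E, |w'| = |w| ∧ f w' = |f w| := by
  rcases le_total 0 (f w) with h | h
  · exact ⟨w, rfl, (abs_of_nonneg h).symm⟩
  · exact ⟨-w, abs_neg w, by rw [map_neg, abs_of_nonpos h]⟩

variable {E : Type*} [NormedAddCommGroup E] [Lattice E] [IsOrderedAddMonoid E] [HasSolidNorm E]

theorem DisjointSeq.comp_injective {x : ℕ → E} (hx : DisjointSeq x) {φ : ℕ → ℕ}
    (hφ : Function.Injective φ) : DisjointSeq (x ∘ φ) :=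
  fun _ _ hmn => hx _ _ (hφ.ne hmn)

variable [NormedSpace ℝ E]

theorem sum_mul_abs_apply_le {ι : Type*} (f : E →L[ℝ] ℝ) (s : Finset ι) {μ : ι → ℝ}
    (hμ : ∀ i ∈ s, 0 ≤ μ i) (w : ι → E) :
    ∑ i ∈ s, μ i * |f (w i)| ≤ ‖f‖ * ‖∑ i ∈ s, μ i • |w i|‖ := by
  choose w' hw'abs hw'f using fun i => exists_abs_eq_and_apply_eq_abs f (w i)
  have hnonneg : 0 ≤ ∑ i ∈ s, μ i • |w i| :=
    Finset.sum_nonneg fun i hi => smul_nonneg (hμ i hi) (abs_nonneg _)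
  have habs : |∑ i ∈ s, μ i • w' i| ≤ ∑ i ∈ s, μ i • |w i| := by
    refine (Finset.le_sum_of_subadditive _ abs_zero.le abs_add_le s _).trans
      (Finset.sum_le_sum fun i hi => ?_)
    rw [abs_smul_of_nonneg (hμ i hi), hw'abs]
  calc ∑ i ∈ s, μ i * |f (w i)| = f (∑ i ∈ s, μ i • w' i) := by simp [hw'f]
    _ ≤ ‖f‖ * ‖∑ i ∈ s, μ i • w' i‖ := (le_abs_self _).trans (f.le_opNorm _)
    _ ≤ ‖f‖ * ‖∑ i ∈ s, μ i • |w i|‖ := by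
        gcongr
        exact norm_le_norm_of_abs_le_abs (habs.trans_eq (abs_of_nonneg hnonneg).symm)

theorem DisjointSeq.weaklyNull_of_abs_le {w : ℕ → E} (hw : DisjointSeq w) {u : E}
    (hwu : ∀ n, |w n| ≤ u) : WeaklyNull w := by
  intro f
  have hu : 0 ≤ u := (abs_nonneg _).trans (hwu 0)
  have hsum : Summable fun n => |f (w n)| := by
    refine summable_of_sum_range_le (fun _ => abs_nonneg _) (c := ‖f‖ * ‖u‖) fun m => ?_
    have hle := sum_mul_abs_apply_le f (Finset.range m) (μ := fun _ => 1) (fun _ _ => zero_le_one) w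
    simp only [one_mul, one_smul] at hle
    refine hle.trans (mul_le_mul_of_nonneg_left (norm_le_norm_of_abs_le_abs ?_) (norm_nonneg f))
    rw [abs_of_nonneg (Finset.sum_nonneg fun _ _ => abs_nonneg _), abs_of_nonneg hu]
    exact sum_le_of_pairwise_inf_eq_zero (fun _ _ => abs_nonneg _)
      (fun i _ j _ hij => hw i j hij) hu fun i _ => hwu i
  exact (tendsto_zero_iff_abs_tendsto_zero _).mpr hsum.tendsto_atTop_zero

theorem WeaklyNull.of_abs_le {x w : ℕ → E} (hx : WeaklyNull x) (hxd : DisjointSeq x)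
    (hwx : ∀ n, |w n| ≤ |x n|) : WeaklyNull w := by
  intro f
  refine Metric.tendsto_nhds.mpr fun ε hε => ?_
  simp only [Real.dist_0_eq_abs]
  by_contra hfreq
  simp only [not_eventually, not_lt] at hfreq
  obtain ⟨φ, hφ, hφε⟩ := extraction_of_frequently_atTop hfreq
  obtain ⟨s, μ, hμ0, hμ1, hsmall⟩ :=
    (hx.comp_tendsto hφ.tendsto_atTop).exists_convexCombination_norm_lt
      (δ := ε / (‖f‖ + 1)) (by positivity)
  have hdisj : (s : Set ℕ).Pairwise fun i j => |μ i • x (φ i)| ⊓ |μ j • x (φ j)| = 0 := by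
    intro i hi j hj hij
    rw [abs_smul_of_nonneg (hμ0 i hi), abs_smul_of_nonneg (hμ0 j hj)]
    exact smul_inf_smul_eq_zero (abs_nonneg _) (abs_nonneg _) (hxd _ _ (hφ.injective.ne hij))
      (hμ0 i hi) (hμ0 j hj)
  have hbound : ε ≤ ‖f‖ * ‖∑ i ∈ s, μ i • x (φ i)‖ := calc
    ε = ∑ i ∈ s, μ i * ε := by rw [← Finset.sum_mul, hμ1, one_mul]
    _ ≤ ∑ i ∈ s, μ i * |f (w (φ i))| :=
        Finset.sum_le_sum fun i hi => mul_le_mul_of_nonneg_left (hφε i) (hμ0 i hi)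
    _ ≤ ‖f‖ * ‖∑ i ∈ s, μ i • |w (φ i)|‖ := sum_mul_abs_apply_le f s hμ0 _
    _ ≤ ‖f‖ * ‖∑ i ∈ s, μ i • x (φ i)‖ := by
        gcongr
        refine norm_le_norm_of_abs_le_abs ?_
        rw [abs_sum_eq_sum_abs_of_pairwise hdisj,
          abs_of_nonneg (Finset.sum_nonneg fun i hi => smul_nonneg (hμ0 i hi) (abs_nonneg _))]
        refine Finset.sum_le_sum fun i hi => ?_
        rw [abs_smul_of_nonneg (hμ0 i hi)]
        exact smul_le_smul_of_nonneg_left (hwx _) (hμ0 i hi)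
  rw [Function.comp_def, lt_div_iff₀ (by positivity)] at hsmall
  nlinarith [norm_nonneg f, norm_nonneg (∑ i ∈ s, μ i • x (φ i))]

theorem disjointlyWeaklyCompact_range {x : ℕ → E} (hxd : DisjointSeq x) (hx : WeaklyNull x) :
    DisjointlyWeaklyCompact (Set.range x) := by
  obtain ⟨C, hC⟩ := hx.exists_forall_norm_le
  refine ⟨isBounded_iff_forall_norm_le.mpr ⟨C, Set.forall_mem_range.mpr hC⟩,
    fun z hz hzd f => ?_⟩
  choose σ hσ using fun n => show ∃ k, |z n| ≤ |x k| by
    obtain ⟨_, ⟨k, rfl⟩, h⟩ := hz n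
    exact ⟨k, h⟩
  refine tendsto_of_subseq_tendsto fun ns hns => ?_
  obtain ⟨ψ, hψ, hnsψ⟩ := strictMono_subseq_of_tendsto_atTop hns
  obtain ⟨g, hg | hg⟩ := exists_increasing_or_nonincreasing_subseq (· < ·) (σ ∘ ns ∘ ψ)
  · have hκ : StrictMono (σ ∘ ns ∘ ψ ∘ g) := fun m n h => hg m n h
    exact ⟨ψ ∘ g, (hx.comp_tendsto hκ.tendsto_atTop).of_abs_le
      (hxd.comp_injective hκ.injective) (fun n => hσ _) f⟩
  · -- the dominating indices stay below `N`, so the subsequence is order bounded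
    set N := σ (ns (ψ (g 0)))
    have hle : ∀ n, σ (ns (ψ (g n))) ≤ N := fun n => by
      rcases n.eq_zero_or_pos with rfl | hn
      · rfl
      · exact not_lt.mp (hg 0 n hn)
    refine ⟨ψ ∘ g, DisjointSeq.weaklyNull_of_abs_le
      (hzd.comp_injective (hnsψ.injective.comp g.injective))
      (u := ∑ k ∈ Finset.range (N + 1), |x k|) (fun n => (hσ _).trans ?_) f⟩
    exact Finset.single_le_sum (f := fun k => |x k|) (fun _ _ => abs_nonneg _)
      (Finset.mem_range.mpr (Nat.lt_succ_of_le (hle n)))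

end DisjointlyWeaklyCompact

section PositiveFunctional

variable {E : Type*} [NormedAddCommGroup E] [Lattice E] [IsOrderedAddMonoid E] [HasSolidNorm E]

theorem norm_le_norm_of_nonneg_of_le {a b : E} (ha : 0 ≤ a) (hab : a ≤ b) : ‖a‖ ≤ ‖b‖ :=
  norm_le_norm_of_abs_le_abs (by rwa [abs_of_nonneg ha, abs_of_nonneg (ha.trans hab)])

variable [NormedSpace ℝ E]

theorem PositiveOp.monotone {f : E →L[ℝ] ℝ} (hf : PositiveOp f) : Monotone f :=
  fun a b hab => sub_nonneg.mp (map_sub f b a ▸ hf (b - a) (sub_nonneg.mpr hab))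

/-- Hahn–Banach, dominated by the sublinear functional `u ↦ ‖u⁺‖`. -/
theorem exists_positiveOp_norm_le_one_apply_eq_norm {v : E} (hv : 0 ≤ v) :
    ∃ f : E →L[ℝ] ℝ, PositiveOp f ∧ ‖f‖ ≤ 1 ∧ f v = ‖v‖ := by
  have hker : ∀ c : ℝ, c • v = 0 → RingHom.id ℝ c • ‖v‖ = 0 := fun c hc => by
    simpa [norm_smul] using congrArg norm hc
  set f₀ := LinearPMap.mkSpanSingleton' v ‖v‖ hker
  have hf₀ : ∀ u : f₀.domain, f₀ u ≤ ‖(u : E)⁺‖ := by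
    rintro ⟨_, hu⟩
    obtain ⟨c, rfl⟩ := Submodule.mem_span_singleton.mp hu
    rw [LinearPMap.mkSpanSingleton'_apply, RingHom.id_apply, smul_eq_mul]
    rcases le_or_gt 0 c with hc | hc
    · rw [posPart_smul_of_nonneg hc, posPart_eq_self.mpr hv, norm_smul, Real.norm_of_nonneg hc]
    · exact (mul_nonpos_of_nonpos_of_nonneg hc.le (norm_nonneg v)).trans (norm_nonneg _)
  obtain ⟨g, hgv, hg⟩ := exists_extension_of_le_sublinear f₀ (fun u => ‖u⁺‖)
    (fun c hc u => by
      simp only [posPart_smul_of_nonneg hc.le, norm_smul, Real.norm_of_nonneg hc.le])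
    (fun u w => (norm_le_norm_of_nonneg_of_le (posPart_nonneg _) (posPart_add_le u w)).trans
      (norm_add_le _ _))
    hf₀
  have hneg : ∀ u, -g u ≤ ‖u⁻‖ := fun u => by simpa using hg (-u)
  have hbound : ∀ u, ‖g u‖ ≤ 1 * ‖u‖ := fun u => by
    rw [one_mul, Real.norm_eq_abs, abs_le]
    constructor
    · linarith [hneg u, norm_le_norm_of_nonneg_of_le (negPart_nonneg u) (negPart_le_abs u),
        norm_abs_eq_norm u]
    · linarith [hg u, norm_le_norm_of_nonneg_of_le (posPart_nonneg u) (posPart_le_abs u),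
        norm_abs_eq_norm u]
  refine ⟨g.mkContinuous 1 hbound, fun u hu => ?_, LinearMap.mkContinuous_norm_le g zero_le_one _,
    ?_⟩
  · simpa [negPart_eq_zero.mpr hu] using hneg u
  · exact (hgv ⟨v, Submodule.mem_span_singleton_self v⟩).trans
      (LinearPMap.mkSpanSingleton'_apply_self _ _ _ _)

end PositiveFunctional

section BandComponent

variable {E : Type*} [NormedAddCommGroup E] [Lattice E] [IsOrderedAddMonoid E] [HasSolidNorm E]
  [NormedSpace ℝ E]

/-- For `u ≥ 0`, `bandSup f v u` is the value at `u` of the component of `f` in the band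
generated by `v`. -/
noncomputable def bandSup (f : E →L[ℝ] ℝ) (v u : E) : ℝ :=
  ⨆ n : ℕ, f (u ⊓ n • v)

variable {f : E →L[ℝ] ℝ} {v : E}

theorem apply_inf_nsmul_le_bandSup (hf : PositiveOp f) (u : E) (n : ℕ) :
    f (u ⊓ n • v) ≤ bandSup f v u :=
  le_ciSup (f := fun n : ℕ => f (u ⊓ n • v))
    ⟨f u, Set.forall_mem_range.mpr fun _ => hf.monotone inf_le_left⟩ n

theorem bandSup_le_apply (hf : PositiveOp f) (u : E) : bandSup f v u ≤ f u :=
  ciSup_le fun _ => hf.monotone inf_le_left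

theorem bandSup_mono (hf : PositiveOp f) : Monotone (bandSup f v) := fun _ b hab =>
  ciSup_le fun n => (hf.monotone (inf_le_inf_right _ hab)).trans (apply_inf_nsmul_le_bandSup hf b n)

theorem bandSup_nonneg (hf : PositiveOp f) {u : E} (hu : 0 ≤ u) : 0 ≤ bandSup f v u := by
  simpa [inf_eq_right.mpr hu] using apply_inf_nsmul_le_bandSup hf (v := v) u 0

theorem bandSup_add (hf : PositiveOp f) (hv : 0 ≤ v) {a b : E} (ha : 0 ≤ a) (hb : 0 ≤ b) :
    bandSup f v (a + b) = bandSup f v a + bandSup f v b := by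
  refine le_antisymm (ciSup_le fun n => ?_) (ciSup_add_ciSup_le fun m n => ?_)
  · calc f ((a + b) ⊓ n • v) ≤ f (a ⊓ n • v + b ⊓ n • v) := by
          refine hf.monotone ?_
          simpa only [inf_comm _ (n • v)] using inf_add_le_inf_add_inf ha hb (nsmul_nonneg hv n)
      _ ≤ bandSup f v a + bandSup f v b := by
          rw [map_add]
          exact add_le_add (apply_inf_nsmul_le_bandSup hf a n) (apply_inf_nsmul_le_bandSup hf b n)
  · calc f (a ⊓ m • v) + f (b ⊓ n • v) ≤ f ((a + b) ⊓ (m + n) • v) := by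
          rw [← map_add, add_nsmul]
          exact hf.monotone (le_inf (add_le_add inf_le_left inf_le_left)
            (add_le_add inf_le_right inf_le_right))
      _ ≤ bandSup f v (a + b) := apply_inf_nsmul_le_bandSup hf _ _

theorem bandSup_self (hf : PositiveOp f) : bandSup f v v = f v :=
  (bandSup_le_apply hf v).antisymm (by simpa using apply_inf_nsmul_le_bandSup hf (v := v) v 1)

theorem bandSup_eq_zero (hf : PositiveOp f) (hv : 0 ≤ v) {u : E} (hu : 0 ≤ u) (huv : u ⊓ v = 0) :
    bandSup f v u = 0 :=
  (ciSup_le fun n => by rw [inf_nsmul_eq_zero hu hv huv, map_zero]).antisymm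
    (bandSup_nonneg hf hu)

theorem bandSup_posPart_sub_negPart_add (hf : PositiveOp f) (hv : 0 ≤ v) (a b : E) :
    bandSup f v (a + b)⁺ - bandSup f v (a + b)⁻ =
      (bandSup f v a⁺ - bandSup f v a⁻) + (bandSup f v b⁺ - bandSup f v b⁻) := by
  have hsplit : (a + b)⁺ + (a⁻ + b⁻) = (a + b)⁻ + (a⁺ + b⁺) := by
    have h : (a + b)⁺ - (a + b)⁻ = (a⁺ - a⁻) + (b⁺ - b⁻) := by
      rw [posPart_sub_negPart, posPart_sub_negPart, posPart_sub_negPart]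
    rw [← sub_eq_zero, ← sub_eq_zero.mpr h]
    abel
  have := congrArg (bandSup f v) hsplit
  rw [bandSup_add hf hv (posPart_nonneg _) (add_nonneg (negPart_nonneg _) (negPart_nonneg _)),
    bandSup_add hf hv (negPart_nonneg _) (add_nonneg (posPart_nonneg _) (posPart_nonneg _)),
    bandSup_add hf hv (negPart_nonneg _) (negPart_nonneg _),
    bandSup_add hf hv (posPart_nonneg _) (posPart_nonneg _)] at this
  linarith

theorem abs_bandSup_posPart_sub_negPart_le (hf : PositiveOp f) (u : E) :
    |bandSup f v u⁺ - bandSup f v u⁻| ≤ bandSup f v |u| :=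
  abs_sub_le_of_nonneg_of_le (bandSup_nonneg hf (posPart_nonneg u))
    (bandSup_mono hf (posPart_le_abs u)) (bandSup_nonneg hf (negPart_nonneg u))
    (bandSup_mono hf (negPart_le_abs u))

theorem bandSup_abs_le (hf : PositiveOp f) (u : E) : bandSup f v |u| ≤ ‖f‖ * ‖u‖ :=
  (bandSup_le_apply hf _).trans <| (le_abs_self _).trans <|
    (f.le_opNorm _).trans_eq (by rw [norm_abs_eq_norm])

noncomputable def bandComponent (f : E →L[ℝ] ℝ) (hf : PositiveOp f) (v : E) (hv : 0 ≤ v) :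
    E →L[ℝ] ℝ :=
  let g : E →+ ℝ := .mk' (fun u => bandSup f v u⁺ - bandSup f v u⁻)
    (bandSup_posPart_sub_negPart_add hf hv)
  g.toRealLinearMap <| AddMonoidHomClass.continuous_of_bound g ‖f‖ fun u =>
    (abs_bandSup_posPart_sub_negPart_le hf u).trans (bandSup_abs_le hf u)

variable (hf : PositiveOp f) (hv : 0 ≤ v)

theorem bandComponent_apply (u : E) :
    bandComponent f hf v hv u = bandSup f v u⁺ - bandSup f v u⁻ :=
  rfl

theorem abs_bandComponent_le (u : E) : |bandComponent f hf v hv u| ≤ bandSup f v |u| :=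
  abs_bandSup_posPart_sub_negPart_le hf u

theorem norm_bandComponent_le : ‖bandComponent f hf v hv‖ ≤ ‖f‖ :=
  (bandComponent f hf v hv).opNorm_le_bound (norm_nonneg f) fun u =>
    (abs_bandComponent_le hf hv u).trans (bandSup_abs_le hf u)

theorem bandComponent_self : bandComponent f hf v hv v = f v := by
  rw [bandComponent_apply, posPart_eq_self.mpr hv, negPart_eq_zero.mpr hv,
    bandSup_self hf, bandSup_eq_zero hf hv le_rfl (inf_eq_left.mpr hv), sub_zero]

theorem bandComponent_eq_zero {u : E} (hu : |u| ⊓ v = 0) : bandComponent f hf v hv u = 0 := by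
  have hdisj : ∀ {w : E}, 0 ≤ w → w ≤ |u| → w ⊓ v = 0 := fun hw hwu =>
    le_antisymm (hu ▸ inf_le_inf_right v hwu) (le_inf hw hv)
  rw [bandComponent_apply,
    bandSup_eq_zero hf hv (posPart_nonneg u) (hdisj (posPart_nonneg u) (posPart_le_abs u)),
    bandSup_eq_zero hf hv (negPart_nonneg u) (hdisj (negPart_nonneg u) (negPart_le_abs u)),
    sub_zero]

end BandComponent

section LpInfty

variable {X : Type*} [NormedAddCommGroup X] [NormedSpace ℝ X]

noncomputable def lpInftyMap (H : ℕ → X →L[ℝ] ℝ) (C : ℝ) (hH : ∀ k, ‖H k‖ ≤ C) :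
    X →L[ℝ] lp (fun _ : ℕ => ℝ) ⊤ :=
  LinearMap.mkContinuous
    { toFun := fun u => ⟨fun k => H k u, memℓp_infty ⟨C * ‖u‖, Set.forall_mem_range.mpr fun k =>
        (H k).le_of_opNorm_le (hH k) u⟩⟩
      map_add' := fun u w => lp.ext <| funext fun k => map_add (H k) u w
      map_smul' := fun c u => lp.ext <| funext fun k => map_smul (H k) c u }
    C fun u => lp.norm_le_of_forall_le (mul_nonneg ((norm_nonneg _).trans (hH 0)) (norm_nonneg u))
      fun k => (H k).le_of_opNorm_le (hH k) u

theorem lpInftyMap_apply_coe (H : ℕ → X →L[ℝ] ℝ) (C : ℝ) (hH : ∀ k, ‖H k‖ ≤ C) (u : X) (k : ℕ) :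
    (lpInftyMap H C hH u : ℕ → ℝ) k = H k u :=
  rfl

/-- Up to any `ε > 0`, the operator factors on `B` through finitely many coordinates. -/
theorem isCompact_closure_image_lpInftyMap {H : ℕ → X →L[ℝ] ℝ} {C : ℝ} {hH : ∀ k, ‖H k‖ ≤ C}
    {B : Set X} (hB : IsBounded B) (hdecay : ∀ δ > 0, ∀ᶠ k in atTop, ∀ b ∈ B, |H k b| ≤ δ) :
    IsCompact (closure (lpInftyMap H C hH '' B)) := by
  refine (TotallyBounded.closure ?_).isCompact_of_isClosed isClosed_closure
  refine Metric.totallyBounded_iff.mpr fun ε hε => ?_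
  obtain ⟨N, hN⟩ := eventually_atTop.mp (hdecay (ε / 2) (half_pos hε))
  let π : X →L[ℝ] (Fin N → ℝ) := ContinuousLinearMap.pi fun i => H i
  let P : ℕ → (Fin N → ℝ) →L[ℝ] ℝ := fun k =>
    if h : k < N then ContinuousLinearMap.proj ⟨k, h⟩ else 0
  have hP : ∀ k, ‖P k‖ ≤ 1 := fun k => by
    by_cases h : k < N
    · simpa [P, h] using ContinuousLinearMap.opNorm_le_bound _ zero_le_one fun c => by
        simpa using norm_le_pi_norm c ⟨k, h⟩
    · simp [P, h]
  let ι := lpInftyMap P 1 hP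
  have hK : TotallyBounded (ι '' (π '' B)) :=
    ((π.lipschitz.isBounded_image hB).isCompact_closure.totallyBounded.subset
      subset_closure).image ι.uniformContinuous
  obtain ⟨t, ht, hcover⟩ := Metric.totallyBounded_iff.mp hK (ε / 2) (half_pos hε)
  refine ⟨t, ht, ?_⟩
  rintro _ ⟨b, hb, rfl⟩
  obtain ⟨y, hy, hby⟩ := Set.mem_iUnion₂.mp (hcover ⟨π b, ⟨b, hb, rfl⟩, rfl⟩)
  refine Set.mem_iUnion₂.mpr ⟨y, hy, ?_⟩
  have htrunc : dist (lpInftyMap H C hH b) (ι (π b)) ≤ ε / 2 := by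
    rw [dist_eq_norm]
    refine lp.norm_le_of_forall_le (half_pos hε).le fun k => ?_
    rw [lp.coeFn_sub, Pi.sub_apply, lpInftyMap_apply_coe, lpInftyMap_apply_coe]
    by_cases h : k < N
    · simp [P, π, h, (half_pos hε).le]
    · simpa [P, h] using hN k (not_lt.mp h) b hb
  exact Metric.mem_ball.mpr ((dist_triangle _ _ _).trans_lt (by linarith [Metric.mem_ball.mp hby]))

end LpInfty

theorem not_isCompact_closure_range_of_pairwise_le_dist {α : Type*} [MetricSpace α] {u : ℕ → α}
    {δ : ℝ} (hδ : 0 < δ) (hu : Pairwise fun m n => δ ≤ dist (u m) (u n)) :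
    ¬ IsCompact (closure (Set.range u)) := fun hK => by
  have hfin := ((Metric.isClosedEmbedding_of_pairwise_le_dist hδ hu).isCompact_preimage
    hK).finite_of_discrete
  have huniv : u ⁻¹' closure (Set.range u) = Set.univ :=
    Set.eq_univ_of_forall fun n => subset_closure (Set.mem_range_self n)
  rw [huniv] at hfin
  exact Set.infinite_univ hfin

section Main

variable {E : Type*} [NormedAddCommGroup E] [Lattice E] [IsOrderedAddMonoid E] [HasSolidNorm E]
  [NormedSpace ℝ E]

theorem LWeaklyCompactSet.eventually_apply_inf_nsmul_le {B : Set E} (hB : LWeaklyCompactSet B)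
    {f : ℕ → E →L[ℝ] ℝ} (hf : ∀ k, ‖f k‖ ≤ 1) {v : ℕ → E} (hv : ∀ k, 0 ≤ v k)
    (hvd : Pairwise fun k m => v k ⊓ v m = 0) {δ : ℝ} (hδ : 0 < δ) :
    ∀ᶠ k in atTop, ∀ b ∈ B, ∀ n : ℕ, f k (|b| ⊓ n • v k) ≤ δ := by
  by_contra hfreq
  simp only [not_eventually, not_forall, not_le, exists_prop] at hfreq
  obtain ⟨φ, hφ, hφδ⟩ := extraction_of_frequently_atTop hfreq
  choose b hbB n hn using hφδ
  set u : ℕ → E := fun j => |b j| ⊓ n j • v (φ j)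
  have hu0 : ∀ j, 0 ≤ u j := fun j => le_inf (abs_nonneg _) (nsmul_nonneg (hv _) _)
  have hsol : ∀ j, u j ∈ SolidHull B := fun j =>
    ⟨b j, hbB j, (abs_of_nonneg (hu0 j)).trans_le inf_le_left⟩
  have hud : DisjointSeq u := fun i j hij => by
    rw [abs_of_nonneg (hu0 i), abs_of_nonneg (hu0 j)]
    refine le_antisymm ?_ (le_inf (hu0 i) (hu0 j))
    exact (inf_le_inf inf_le_right inf_le_right).trans
      (nsmul_inf_nsmul_eq_zero (hv _) (hv _) (hvd (hφ.injective.ne hij)) _ _).le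
  obtain ⟨j, hj⟩ := ((hB.2 u hsol hud).eventually (gt_mem_nhds hδ)).exists
  have := calc δ < f (φ j) (u j) := hn j
    _ ≤ ‖f (φ j)‖ * ‖u j‖ := (le_abs_self _).trans ((f _).le_opNorm _)
    _ ≤ ‖u j‖ := mul_le_of_le_one_left (norm_nonneg _) (hf _)
  linarith

/-- The witness is `u ↦ (H k u)ₖ`, where `H k` is the component, in the band generated by
`(y k)⁺`, of a positive functional norming `(y k)⁺`. -/
theorem exists_lwCompact_not_dwCompact {y : ℕ → E} (hyd : DisjointSeq y) (hy : WeaklyNull y)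
    {ε : ℝ} (hε : 0 < ε) (hyε : ∀ k, ε ≤ ‖(y k)⁺‖) :
    ∃ T : E →L[ℝ] lp (fun _ : ℕ => ℝ) ⊤, LWCompact T ∧ ¬ DWCompact T := by
  choose f hf hf1 hfv using fun k =>
    exists_positiveOp_norm_le_one_apply_eq_norm (posPart_nonneg (y k))
  set H := fun k => bandComponent (f k) (hf k) (y k)⁺ (posPart_nonneg _)
  have hvd : Pairwise fun k m => (y k)⁺ ⊓ (y m)⁺ = 0 := fun k m hkm =>
    le_antisymm ((inf_le_inf (posPart_le_abs _) (posPart_le_abs _)).trans_eq (hyd k m hkm))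
      (le_inf (posPart_nonneg _) (posPart_nonneg _))
  have hHdiag : ∀ k, H k (y k) = ‖(y k)⁺‖ := fun k => by
    have hsplit : H k (y k) = H k (y k)⁺ - H k (y k)⁻ := by rw [← map_sub, posPart_sub_negPart]
    have hdisj : |(y k)⁻| ⊓ (y k)⁺ = 0 := by
      rw [abs_of_nonneg (negPart_nonneg _), inf_comm, posPart_inf_negPart_eq_zero]
    rw [hsplit, bandComponent_self, hfv, bandComponent_eq_zero _ _ hdisj, sub_zero]
  have hHoff : ∀ k m, k ≠ m → H k (y m) = 0 := fun k m hkm =>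
    bandComponent_eq_zero _ _ <| le_antisymm
      ((inf_le_inf_left _ (posPart_le_abs _)).trans_eq (hyd m k hkm.symm))
      (le_inf (abs_nonneg _) (posPart_nonneg _))
  set T := lpInftyMap H 1 fun k => (norm_bandComponent_le _ _).trans (hf1 k)
  refine ⟨T, fun B hB => isCompact_closure_image_lpInftyMap hB.1 fun δ hδ => ?_, fun hT => ?_⟩
  · filter_upwards [hB.eventually_apply_inf_nsmul_le hf1 (fun k => posPart_nonneg (y k)) hvd hδ]
      with k hk b hb
    exact (abs_bandComponent_le _ _ b).trans (ciSup_le (hk b hb))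
  · refine not_isCompact_closure_range_of_pairwise_le_dist hε (u := T ∘ y) (fun k m hkm => ?_)
      (Set.range_comp T y ▸ hT _ (disjointlyWeaklyCompact_range hyd hy))
    calc ε ≤ ‖((T (y k) - T (y m) : lp (fun _ : ℕ => ℝ) ⊤) : ℕ → ℝ) k‖ := by
          rw [lp.coeFn_sub, Pi.sub_apply, lpInftyMap_apply_coe, lpInftyMap_apply_coe, hHdiag,
            hHoff k m hkm, sub_zero, norm_norm]
          exact hyε k
      _ ≤ dist (T (y k)) (T (y m)) := dist_eq_norm (T (y k)) _ ▸ lp.norm_apply_le_norm (by simp) _ k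

theorem positiveSchurProp_of_forall_lwCompact_dwCompact
    (h : ∀ T : E →L[ℝ] lp (fun _ : ℕ => ℝ) ⊤, LWCompact T → DWCompact T) :
    PositiveSchurProp E := by
  intro x hxd hx
  refine Metric.tendsto_nhds.mpr fun ε hε => ?_
  simp only [dist_zero_right, norm_norm]
  by_contra hfreq
  simp only [not_eventually, not_lt] at hfreq
  obtain ⟨φ, hφ, hφε⟩ := extraction_of_frequently_atTop hfreq
  -- flip signs so that the positive part carries at least half of the norm
  have hhalf : ∀ z : E, ‖z‖ ≤ 2 * ‖z⁺‖ ∨ ‖z‖ ≤ 2 * ‖(-z)⁺‖ := fun z => by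
    have := (norm_sub_le z⁺ z⁻).trans_eq' (by rw [posPart_sub_negPart])
    rw [posPart_neg]
    by_contra! hlt
    linarith [hlt.1, hlt.2]
  set y : ℕ → E := fun n => if ‖x (φ n)‖ ≤ 2 * ‖(x (φ n))⁺‖ then x (φ n) else -x (φ n)
  have hyabs : ∀ n, |y n| = |x (φ n)| := fun n => by dsimp only [y]; split_ifs <;> simp
  have hyd : DisjointSeq y := fun m n hmn => by
    rw [hyabs, hyabs]; exact hxd _ _ (hφ.injective.ne hmn)
  have hy : WeaklyNull y := fun f =>
    squeeze_zero_norm (a := fun n => ‖f (x (φ n))‖) (fun n => by dsimp only [y]; split_ifs <;> simp)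
      (by simpa using ((hx f).comp hφ.tendsto_atTop).norm)
  have hyε : ∀ n, ε / 2 ≤ ‖(y n)⁺‖ := fun n => by
    have := hφε n
    dsimp only [y]
    split_ifs with hn
    · linarith
    · linarith [(hhalf (x (φ n))).resolve_left hn]
  obtain ⟨T, hTLW, hTDW⟩ := exists_lwCompact_not_dwCompact hyd hy (half_pos hε) hyε
  exact hTDW (h T hTLW)

end Main

theorem Homeomorph.isCompact_closure_image_iff {X Y : Type*} [TopologicalSpace X]
    [TopologicalSpace Y] (h : X ≃ₜ Y) (s : Set X) :
    IsCompact (closure (h '' s)) ↔ IsCompact (closure s) := by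
  rw [← h.image_closure, h.isCompact_image]

section Transport

variable {E X Y : Type*} [NormedAddCommGroup E] [NormedSpace ℝ E] [NormedAddCommGroup X]
  [NormedSpace ℝ X] [NormedAddCommGroup Y] [NormedSpace ℝ Y]

theorem isCompact_closure_image_comp_equiv_iff (e : X ≃L[ℝ] Y) (T : E →L[ℝ] X) (A : Set E) :
    IsCompact (closure ((e : X →L[ℝ] Y).comp T '' A)) ↔ IsCompact (closure (T '' A)) := by
  rw [ContinuousLinearMap.coe_comp, Set.image_comp]
  exact e.toHomeomorph.isCompact_closure_image_iff _

variable [Lattice E] [IsOrderedAddMonoid E] [HasSolidNorm E]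

theorem lwCompact_comp_equiv_iff (e : X ≃L[ℝ] Y) (T : E →L[ℝ] X) :
    LWCompact ((e : X →L[ℝ] Y).comp T) ↔ LWCompact T :=
  forall_congr' fun A => imp_congr_right fun _ => isCompact_closure_image_comp_equiv_iff e T A

theorem dwCompact_comp_equiv_iff (e : X ≃L[ℝ] Y) (T : E →L[ℝ] X) :
    DWCompact ((e : X →L[ℝ] Y).comp T) ↔ DWCompact T :=
  forall_congr' fun A => imp_congr_right fun _ => isCompact_closure_image_comp_equiv_iff e T A

end Transport

theorem PositiveSchurProp.lWeaklyCompactSet {E : Type*} [NormedAddCommGroup E] [Lattice E]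
    [IsOrderedAddMonoid E] [HasSolidNorm E] [NormedSpace ℝ E] (h : PositiveSchurProp E)
    {A : Set E} (hA : DisjointlyWeaklyCompact A) : LWeaklyCompactSet A :=
  ⟨hA.1, fun x hx hxd => h x hxd (hA.2 x hx hxd)⟩

theorem lwCompact_dwCompact_iff_positiveSchur_general
    {E : Type*} [NormedAddCommGroup E] [Lattice E] [IsOrderedAddMonoid E] [HasSolidNorm E] [NormedSpace ℝ E] :
    List.TFAE
      [ PositiveSchurProp E,
        ∀ (X : Type*) [NormedAddCommGroup X] [NormedSpace ℝ X] [CompleteSpace X]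
          (T : E →L[ℝ] X), LWCompact T → DWCompact T,
        ∀ T : E →L[ℝ] lp (fun _ : ℕ => ℝ) ⊤, LWCompact T → DWCompact T ] := by
  tfae_have 1 → 2 := fun h _ _ _ _ T hT A hA => hT A (h.lWeaklyCompactSet hA)
  tfae_have 2 → 3 := fun h T hT => by
    -- `X` lives in an arbitrary universe, so pass through `ULift ℓ^∞`
    let e := (ContinuousLinearEquiv.ulift (R₁ := ℝ) (M₁ := lp (fun _ : ℕ => ℝ) ⊤)).symm
    exact (dwCompact_comp_equiv_iff e T).mp (h _ _ ((lwCompact_comp_equiv_iff e T).mpr hT))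
  tfae_have 3 → 1 := positiveSchurProp_of_forall_lwCompact_dwCompact
  tfae_finish

/-- For a Banach lattice `E`, TFAE: (1) `E` has the positive Schur
property; (2) every LW-compact operator from `E` into an arbitrary Banach space is
DW-compact; (3) every LW-compact operator `T : E → ℓ^∞` is DW-compact. -/
theorem lwCompact_dwCompact_iff_positiveSchur
    {E : Type*} [NormedAddCommGroup E] [Lattice E] [IsOrderedAddMonoid E] [HasSolidNorm E] [NormedSpace ℝ E] [CompleteSpace E] :
    List.TFAE
      [ PositiveSchurProp E,
        ∀ (X : Type*) [NormedAddCommGroup X] [NormedSpace ℝ X] [CompleteSpace X]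
          (T : E →L[ℝ] X), LWCompact T → DWCompact T,
        ∀ T : E →L[ℝ] lp (fun _ : ℕ => ℝ) ⊤, LWCompact T → DWCompact T ] :=
  lwCompact_dwCompact_iff_positiveSchur_general
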